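/- For every fixed r ≥ 1, the polynomials p_{n,r}(t) := t·J_{n,r}(t) satisfy p_{r,r}(t) = t and, for all n > r, the recurrence p_{n,r}(t) = n·t·p_{n−1,r}(t) + t·(1−t)·p'_{n−1,r}(t), where p' denotes the derivative with respect to t. -/

import Mathlib

open Finset
open scoped Classical

/-- Number of excedances of a function `f` from `{1, …, s}` to `{1, …, n}`
(0-indexed encoding): positions `i` with `f i > i`. -/
noncomputable def excCount {s n : ℕ} (f : Fin s → Fin n) : ℕ :=
  (univ.filter fun i : Fin s => (i : ℕ) < (f i : ℕ)).card

/-- `J_{n,r}(t) = ∑_f t^exc(f)`, summing over all injections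
`f : {1, …, n-r} → {1, …, n}`, as a polynomial over `ℚ`. -/
noncomputable def Jpoly (n r : ℕ) : Polynomial ℚ :=
  ∑ f ∈ univ.filter (fun f : Fin (n - r) → Fin n => Function.Injective f),
    Polynomial.X ^ excCount f

/-- `p_{n,r}(t) = t · J_{n,r}(t)`. -/
noncomputable def pPoly (n r : ℕ) : Polynomial ℚ := Polynomial.X * Jpoly n r

open Polynomial Function

/-!
Deleting the last position of an injection `f : [s+1] → [n+1]` and renaming its value `n+1`,
if taken, to `j = f(s+1)` identifies such `f` with pairs `(g, j)` with `g : [s] → [n]` injective;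
`insertLast` is the inverse. Re-inserting creates exactly one new excedance when `j > s` or `j` is
the value of a non-excedance of `g` (that position then takes the value `n+1`), and none otherwise.
These are `n - k` of the `n + 1` choices of `j`, where `k = exc g`, so `g` contributes
`(k+1) t^k + (n-k) t^(k+1)` to `J`; multiplied by `t` this is
`(n+1) t · t^(k+1) + t (1-t) (t^(k+1))'`.
-/

section

variable {s n : ℕ}

noncomputable def excPoly (R : Type*) [CommSemiring R] (s n : ℕ) : R[X] :=
  ∑ f ∈ univ.filter (fun f : Fin s → Fin n => Injective f), X ^ excCount f

lemma Jpoly_eq_excPoly (n r : ℕ) : Jpoly n r = excPoly ℚ (n - r) n := rfl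

lemma excPoly_zero_left (R : Type*) [CommSemiring R] (n : ℕ) : excPoly R 0 n = 1 := by
  simp [excPoly, excCount, Injective]

lemma excCount_eq_sum (f : Fin s → Fin n) :
    excCount f = ∑ i : Fin s, if (i : ℕ) < f i then 1 else 0 :=
  card_filter _ _

lemma excCount_le (f : Fin s → Fin n) : excCount f ≤ s :=
  (card_filter_le _ _).trans_eq (card_fin s)

noncomputable def insertLast (g : Fin s → Fin n) (j : Fin (n + 1)) : Fin (s + 1) → Fin (n + 1) :=
  Fin.snoc (fun i => Equiv.swap j (Fin.last n) (g i).castSucc) j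

lemma insertLast_injective2 : Injective2 (insertLast (s := s) (n := n)) := by
  intro g g' j j' h
  obtain ⟨hval, rfl⟩ := Fin.snoc_injective2 h
  exact ⟨funext fun i => Fin.castSucc_injective _ ((Equiv.injective _) (congrFun hval i)), rfl⟩

lemma insertLast_injective {g : Fin s → Fin n} (hg : Injective g) (j : Fin (n + 1)) :
    Injective (insertLast g j) := by
  refine Fin.snoc_injective_of_injective
    ((Equiv.injective _).comp ((Fin.castSucc_injective _).comp hg)) ?_
  rintro ⟨i, hi⟩
  rw [Equiv.swap_apply_eq_iff, Equiv.swap_apply_left] at hi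
  exact Fin.castSucc_ne_last _ hi

lemma exists_insertLast_eq {f : Fin (s + 1) → Fin (n + 1)} (hf : Injective f) :
    ∃ g : Fin s → Fin n, Injective g ∧ insertLast g (f (Fin.last s)) = f := by
  set j := f (Fin.last s)
  have hne : ∀ i : Fin s, Equiv.swap j (Fin.last n) (f i.castSucc) ≠ Fin.last n := by
    intro i h
    rw [Equiv.swap_apply_eq_iff, Equiv.swap_apply_right] at h
    exact Fin.castSucc_ne_last i (hf h)
  refine ⟨fun i => (Equiv.swap j (Fin.last n) (f i.castSucc)).castPred (hne i), ?_, ?_⟩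
  · intro a b hab
    exact Fin.castSucc_injective _ (hf ((Equiv.injective _) (Fin.castPred_inj.mp hab)))
  · simp only [insertLast, Fin.castSucc_castPred, Equiv.swap_apply_self]
    exact Fin.snoc_init_self f

def nonExcedances (g : Fin s → Fin n) : Finset (Fin s) := {i | (g i : ℕ) ≤ i}

lemma card_nonExcedances (g : Fin s → Fin n) : #(nonExcedances g) = s - excCount g := by
  have h := card_filter_add_card_filter_not (s := univ) fun i : Fin s => (i : ℕ) < g i
  simp only [card_univ, Fintype.card_fin, not_lt] at h
  unfold nonExcedances excCount
  omega

def raisingValues (g : Fin s → Fin n) : Finset (Fin (n + 1)) :=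
  ({j | s < (j : ℕ)} : Finset (Fin (n + 1))) ∪ (nonExcedances g).image fun i => (g i).castSucc

lemma disjoint_raisingValues (g : Fin s → Fin n) :
    Disjoint ({j | s < (j : ℕ)} : Finset (Fin (n + 1)))
      ((nonExcedances g).image fun i => (g i).castSucc) := by
  simp only [disjoint_left, mem_filter, mem_univ, true_and, mem_image, nonExcedances, not_exists,
    not_and]
  intro j hj i hi hij
  have := i.isLt
  rw [← hij, Fin.val_castSucc] at hj
  omega

lemma card_raisingValues (hsn : s ≤ n) {g : Fin s → Fin n} (hg : Injective g) :
    #(raisingValues g) = n - excCount g := by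
  have htop : #({j | s < (j : ℕ)} : Finset (Fin (n + 1))) = n - s := by
    have h := card_filter_add_card_filter_not (s := univ) fun j : Fin (n + 1) => (j : ℕ) < s + 1
    simp only [Fin.card_filter_val_lt, card_univ, Fintype.card_fin, not_lt,
      Nat.succ_le_iff] at h
    omega
  rw [raisingValues, card_union_of_disjoint (disjoint_raisingValues g), htop,
    card_image_of_injective _ fun a b h => hg (Fin.castSucc_injective _ h), card_nonExcedances]
  have := excCount_le g
  omega

lemma excCount_insertLast (hsn : s ≤ n) {g : Fin s → Fin n} (hg : Injective g)
    (j : Fin (n + 1)) :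
    excCount (insertLast g j) = excCount g + if j ∈ raisingValues g then 1 else 0 := by
  have hinit : ∀ i : Fin s,
      (if (i : ℕ) < Equiv.swap j (Fin.last n) (g i).castSucc then 1 else 0) =
        (if (i : ℕ) < g i then 1 else 0) +
          if i ∈ nonExcedances g then (if (g i).castSucc = j then 1 else 0) else 0 := by
    intro i
    have := i.isLt
    by_cases hij : (g i).castSucc = j
    · simp only [hij, Equiv.swap_apply_left, nonExcedances, mem_filter, mem_univ, true_and,
        Fin.val_last, if_true]
      split_ifs <;> omega
    · rw [Equiv.swap_apply_of_ne_of_ne hij (Fin.castSucc_ne_last _)]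
      simp [hij]
  have hnew : ∑ i : Fin s,
      (if i ∈ nonExcedances g then (if (g i).castSucc = j then 1 else 0) else 0) =
        if j ∈ (nonExcedances g).image fun i => (g i).castSucc then 1 else 0 := by
    rw [sum_ite_mem, univ_inter, ← sum_ite_eq' _ j (fun _ => 1),
      sum_image fun a _ b _ hab => hg (Fin.castSucc_injective _ hab)]
  rw [excCount_eq_sum, Fin.sum_univ_castSucc, excCount_eq_sum]
  simp only [insertLast, Fin.snoc_castSucc, Fin.snoc_last, Fin.val_castSucc, hinit,
    sum_add_distrib, hnew, raisingValues, mem_union, mem_filter, mem_univ, true_and, Fin.val_last]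
  have hdisj : s < (j : ℕ) → j ∉ (nonExcedances g).image fun i => (g i).castSucc :=
    fun h => disjoint_left.mp (disjoint_raisingValues g) (by simpa using h)
  rw [add_assoc]
  by_cases h : s < (j : ℕ)
  · simp [h, hdisj h]
  · simp [h, add_comm]

lemma sum_X_pow_excCount_insertLast {R : Type*} [CommSemiring R] (hsn : s ≤ n) {g : Fin s → Fin n} (hg : Injective g) :
    ∑ j, (X : R[X]) ^ excCount (insertLast g j) =
      (n - excCount g) • X ^ (excCount g + 1) + (excCount g + 1) • X ^ excCount g := by
  have hterm : ∀ j, (X : R[X]) ^ (excCount g + if j ∈ raisingValues g then 1 else 0) =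
      if j ∈ raisingValues g then X ^ (excCount g + 1) else X ^ excCount g := by
    intro j
    split_ifs <;> rfl
  have hgood : #{j | j ∉ raisingValues g} = excCount g + 1 := by
    have h := card_filter_add_card_filter_not (s := univ) (· ∈ raisingValues g)
    rw [filter_mem_eq_inter, univ_inter, card_raisingValues hsn hg, card_univ,
      Fintype.card_fin] at h
    have := excCount_le g
    omega
  simp only [excCount_insertLast hsn hg, hterm]
  rw [sum_ite, sum_const, sum_const, filter_mem_eq_inter, univ_inter, card_raisingValues hsn hg,
    hgood]

lemma excPoly_succ_succ {R : Type*} [CommSemiring R] (hsn : s ≤ n) :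
    excPoly R (s + 1) (n + 1) =
      ∑ g ∈ univ.filter (fun g : Fin s → Fin n => Injective g),
        ((n - excCount g) • X ^ (excCount g + 1) + (excCount g + 1) • X ^ excCount g) := by
  calc excPoly R (s + 1) (n + 1)
      = ∑ p ∈ univ.filter (fun g : Fin s → Fin n => Injective g) ×ˢ univ,
          X ^ excCount (insertLast p.1 p.2) := by
        refine (sum_bij (fun p _ => insertLast p.1 p.2) ?_ ?_ ?_ fun _ _ => rfl).symm
        · intro p hp
          simp only [mem_product, mem_filter, mem_univ, true_and] at hp ⊢
          exact insertLast_injective hp.1 p.2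
        · intro p _ q _ h
          obtain ⟨h₁, h₂⟩ := insertLast_injective2 h
          exact Prod.ext h₁ h₂
        · intro f hf
          obtain ⟨g, hg, hgf⟩ := exists_insertLast_eq (mem_filter.mp hf).2
          exact ⟨(g, f (Fin.last s)), by simpa using hg, hgf⟩
    _ = _ := by
      rw [sum_product]
      exact sum_congr rfl fun g hg => sum_X_pow_excCount_insertLast hsn (mem_filter.mp hg).2

lemma X_mul_excPoly_succ_succ {R : Type*} [CommRing R] (hsn : s ≤ n) :
    X * excPoly R (s + 1) (n + 1) =
      C ((n : R) + 1) * X * (X * excPoly R s n) + X * (1 - X) * derivative (X * excPoly R s n) := by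
  rw [excPoly_succ_succ hsn, excPoly]
  simp only [mul_sum, derivative_sum, ← sum_add_distrib]
  refine sum_congr rfl fun g _ => ?_
  have hk : excCount g ≤ n := (excCount_le g).trans hsn
  rw [← pow_succ', derivative_X_pow]
  simp only [nsmul_eq_mul, Nat.cast_sub hk, Nat.cast_add, Nat.cast_one, map_add, map_one,
    map_natCast, Nat.add_sub_cancel]
  ring

end

theorem pPoly_recurrence_general (r : ℕ) :
    pPoly r r = Polynomial.X ∧
    ∀ n : ℕ, r < n →
      pPoly n r
        = Polynomial.C (n : ℚ) * Polynomial.X * pPoly (n - 1) r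
          + Polynomial.X * (1 - Polynomial.X) * Polynomial.derivative (pPoly (n - 1) r) := by
  refine ⟨by rw [pPoly, Jpoly_eq_excPoly, Nat.sub_self, excPoly_zero_left, mul_one], ?_⟩
  intro n hrn
  obtain ⟨m, rfl⟩ : ∃ m, n = m + 1 := ⟨n - 1, by omega⟩
  have hs : m + 1 - r = m - r + 1 := by omega
  rw [Nat.add_sub_cancel, pPoly, pPoly, Jpoly_eq_excPoly, Jpoly_eq_excPoly, hs,
    X_mul_excPoly_succ_succ (Nat.sub_le m r), Nat.cast_succ]

/-- For fixed `r ≥ 1`: `p_{r,r}(t) = t` and, for `n > r`,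
`p_{n,r}(t) = n t p_{n-1,r}(t) + t (1 - t) p'_{n-1,r}(t)`. -/
theorem pPoly_recurrence (r : ℕ) (hr : 1 ≤ r) :
    pPoly r r = Polynomial.X ∧
    ∀ n : ℕ, r < n →
      pPoly n r
        = Polynomial.C (n : ℚ) * Polynomial.X * pPoly (n - 1) r
          + Polynomial.X * (1 - Polynomial.X) * Polynomial.derivative (pPoly (n - 1) r) :=
  pPoly_recurrence_general r
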